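/- Let G be a simple undirected connected graph with n ≥ 2 vertices and α ∈ [0,1]. Then the α-distance Estrada index satisfies DEE_α(G) ≥ √( n + 4αW(G) + n(n−1)·e^{4αW(G)/n} ). -/

import Mathlib

open Finset Matrix Polynomial Real

/-- Distance matrix of a graph on `Fin n`: `(i,j)` entry is the graph distance. -/
noncomputable def distMatrix {n : ℕ} (G : SimpleGraph (Fin n)) : Matrix (Fin n) (Fin n) ℝ :=
  fun i j => (G.dist i j : ℝ)

/-- Transmission of a vertex: sum of distances to all other vertices. -/
noncomputable def transmission {n : ℕ} (G : SimpleGraph (Fin n)) (i : Fin n) : ℝ :=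
  ∑ j, (G.dist i j : ℝ)

/-- The α-distance matrix `D_α(G) = α·Tr(G) + (1-α)·D(G)`. -/
noncomputable def alphaDistMatrix {n : ℕ} (G : SimpleGraph (Fin n)) (α : ℝ) : Matrix (Fin n) (Fin n) ℝ :=
  α • Matrix.diagonal (transmission G) + (1 - α) • distMatrix G

/-- Wiener index `W(G) = (1/2)·∑_{i≠j} d(v_i,v_j)`. -/
noncomputable def wiener {n : ℕ} (G : SimpleGraph (Fin n)) : ℝ :=
  (1 / 2) * ∑ i, ∑ j, (G.dist i j : ℝ)

/-- Frobenius norm of a real matrix. -/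
noncomputable def frobNorm {n : ℕ} (M : Matrix (Fin n) (Fin n) ℝ) : ℝ :=
  Real.sqrt (∑ i, ∑ j, (M i j) ^ 2)

/- The eigenvalues `σᵢ` of `D_α(G)` sum to its trace `2αW(G)`, so it suffices to bound
`(∑ eᶠⁱ)²` from below for arbitrary reals `fᵢ` with `∑ fᵢ = T`. Expanding the square, the
diagonal terms satisfy `e^{2fᵢ} ≥ 1 + 2fᵢ`, and the `n(n-1)` off-diagonal terms `e^{fᵢ+fⱼ}`, whose
exponents average `2T/n`, are bounded by Jensen's inequality for `exp`. -/

section ExpSums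

variable {ι : Type*}

/-- Jensen for `exp`, via the tangent line `exp c * (x - c + 1) ≤ exp x` at the mean `c`. -/
lemma card_mul_exp_le_sum_exp (s : Finset ι) (g : ι → ℝ) {c : ℝ}
    (hc : ∑ i ∈ s, g i = #s * c) :
    #s * exp c ≤ ∑ i ∈ s, exp (g i) :=
  calc (#s : ℝ) * exp c = ∑ i ∈ s, exp c * (g i - c + 1) := by
        rw [← mul_sum, sum_add_distrib, sum_sub_distrib, hc]
        simp only [sum_const, nsmul_eq_mul, mul_one]
        ring
    _ ≤ ∑ i ∈ s, exp (g i) := sum_le_sum fun i _ => by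
        calc exp c * (g i - c + 1) ≤ exp c * exp (g i - c) :=
              mul_le_mul_of_nonneg_left (add_one_le_exp _) (exp_pos c).le
          _ = exp (g i) := by rw [← exp_add, add_sub_cancel]

variable [Fintype ι] [DecidableEq ι]

lemma sq_sum_exp_eq (f : ι → ℝ) :
    (∑ i, exp (f i)) ^ 2 =
      ∑ i, exp (2 * f i) + ∑ p ∈ univ.offDiag, exp (f p.1 + f p.2) := by
  rw [sq, sum_mul_sum, ← sum_product' (f := fun i j => exp (f i) * exp (f j)),
    ← diag_union_offDiag, sum_union (disjoint_diag_offDiag _), sum_diag]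
  simp only [← exp_add, two_mul]

lemma sum_offDiag_add (f : ι → ℝ) :
    ∑ p ∈ univ.offDiag, (f p.1 + f p.2) = 2 * (Fintype.card ι - 1) * ∑ i, f i := by
  have hsplit := sum_union (disjoint_diag_offDiag (univ : Finset ι)) (f := fun p => f p.1 + f p.2)
  rw [diag_union_offDiag, sum_diag, sum_product] at hsplit
  simp only [sum_add_distrib, sum_const, card_univ, nsmul_eq_mul, ← mul_sum] at hsplit ⊢
  linarith

lemma sqrt_le_sum_exp (f : ι → ℝ) :
    √((Fintype.card ι : ℝ) + 2 * ∑ i, f i +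
        Fintype.card ι * (Fintype.card ι - 1) * exp (2 * (∑ i, f i) / Fintype.card ι)) ≤
      ∑ i, exp (f i) := by
  set n : ℝ := (Fintype.card ι : ℝ)
  set T := ∑ i, f i
  have hdiag : n + 2 * T ≤ ∑ i, exp (2 * f i) :=
    calc n + 2 * T = ∑ i, (2 * f i + 1) := by
          simp only [sum_add_distrib, ← mul_sum, sum_const, card_univ, nsmul_eq_mul, mul_one, n, T]
          ring
      _ ≤ ∑ i, exp (2 * f i) := sum_le_sum fun i _ => add_one_le_exp _
  have hmean : n * (2 * T / n) = 2 * T := by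
    rcases isEmpty_or_nonempty ι with _ | _
    · simp [T]
    · exact mul_div_cancel₀ _ (by positivity)
  have hoffDiag : n * (n - 1) * exp (2 * T / n) ≤ ∑ p ∈ univ.offDiag, exp (f p.1 + f p.2) := by
    have hcard : (#(univ : Finset ι).offDiag : ℝ) = n * (n - 1) := by
      rw [offDiag_card, Nat.cast_sub (Nat.le_mul_self _), card_univ]
      push_cast
      ring
    rw [← hcard]
    refine card_mul_exp_le_sum_exp _ (fun p : ι × ι => f p.1 + f p.2) ?_
    rw [sum_offDiag_add, hcard]
    linear_combination (n - 1) * hmean.symm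
  rw [sqrt_le_iff, sq_sum_exp_eq]
  exact ⟨sum_nonneg fun i _ => (exp_pos _).le, by linarith⟩

end ExpSums

lemma trace_alphaDistMatrix {n : ℕ} (G : SimpleGraph (Fin n)) (α : ℝ) :
    (alphaDistMatrix G α).trace = 2 * α * wiener G := by
  simp only [alphaDistMatrix, wiener, transmission, distMatrix, trace, diag_apply, Matrix.add_apply,
    Matrix.smul_apply, diagonal_apply_eq, smul_eq_mul, SimpleGraph.dist_self, Nat.cast_zero, mul_zero,
    add_zero, ← mul_sum]
  ring

theorem stmt_15_general {n : ℕ} (G : SimpleGraph (Fin n))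
    (α : ℝ)
    (hA : (alphaDistMatrix G α).IsHermitian) :
    Real.sqrt ((n : ℝ) + 4 * α * wiener G +
        (n : ℝ) * ((n : ℝ) - 1) * Real.exp (4 * α * wiener G / n)) ≤
      ∑ i, Real.exp (hA.eigenvalues i) := by
  have hsum : ∑ i, hA.eigenvalues i = 2 * α * wiener G := by
    simpa using hA.trace_eq_sum_eigenvalues.symm.trans (trace_alphaDistMatrix G α)
  have := sqrt_le_sum_exp hA.eigenvalues
  rw [hsum, Fintype.card_fin] at this
  rwa [show 4 * α * wiener G = 2 * (2 * α * wiener G) by ring]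

theorem stmt_15 {n : ℕ} (hn : 2 ≤ n) (G : SimpleGraph (Fin n)) (hG : G.Connected)
    (α : ℝ) (hα : α ∈ Set.Icc (0 : ℝ) 1)
    (hA : (alphaDistMatrix G α).IsHermitian) :
    Real.sqrt ((n : ℝ) + 4 * α * wiener G +
        (n : ℝ) * ((n : ℝ) - 1) * Real.exp (4 * α * wiener G / n)) ≤
      ∑ i, Real.exp (hA.eigenvalues i) :=
  stmt_15_general G α hA
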